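/- Let L be an n×n real Metzler matrix (all off-diagonal entries nonnegative) with all column sums nonpositive, and suppose every eigenvalue of L (viewed as a complex matrix) has strictly negative real part. Let κ ∈ ℝⁿ be a row vector with 0 ≤ κ_ℓ ≤ −(∑_h L_{hℓ}) for every index ℓ. Then the row vector −κ·L⁻¹ satisfies −κ·L⁻¹ ≤ e^⊤ entrywise, where e is the all-ones vector. -/

import Mathlib

/-!
`L` need not be strictly column-dominant, so first replace it by `L - ε • 1` with `ε > 0`.
For a Metzler matrix `M` with negative column sums, `0 ≤ z ᵥ* M` forces `z ≤ 0`: at a maximal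
entry `z k > 0` one would get `(z ᵥ* M) k ≤ z k * ∑ i, M i k < 0`. With `z = -(κ ᵥ* M⁻¹) - 1`
one has `z ᵥ* M = -κ - 1 ᵥ* M ≥ 0`, which gives the bound for `L - ε • 1`. The Hurwitz
hypothesis makes `L` invertible, so the bound passes to the limit `ε → 0⁺`.
-/

open Matrix Filter Topology

namespace Matrix

variable {ι : Type*}

def IsMetzler (M : Matrix ι ι ℝ) : Prop := ∀ i j, i ≠ j → 0 ≤ M i j

lemma IsMetzler.sub_smul_one [DecidableEq ι] {M : Matrix ι ι ℝ} (hM : M.IsMetzler) (ε : ℝ) :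
    (M - ε • 1).IsMetzler := fun i j hij => by
  simpa [one_apply_ne hij] using hM i j hij

variable [Fintype ι]

lemma sum_sub_smul_one_apply [DecidableEq ι] (M : Matrix ι ι ℝ) (ε : ℝ) (j : ι) :
    ∑ i, (M - ε • 1) i j = ∑ i, M i j - ε := by
  simp [sub_apply, one_apply, Finset.sum_sub_distrib]

lemma IsMetzler.nonpos_of_nonneg_vecMul {M : Matrix ι ι ℝ} (hM : M.IsMetzler)
    (hcol : ∀ j, ∑ i, M i j < 0) {z : ι → ℝ} (hz : 0 ≤ z ᵥ* M) : z ≤ 0 := by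
  intro j
  by_contra! hzj
  have : Nonempty ι := ⟨j⟩
  obtain ⟨k, hk⟩ := Finite.exists_max z
  have hzk : 0 < z k := hzj.trans_le (hk j)
  have hle : (z ᵥ* M) k ≤ z k * ∑ i, M i k := by
    rw [Finset.mul_sum]
    refine Finset.sum_le_sum fun i _ => ?_
    rcases eq_or_ne i k with rfl | hik
    · exact le_rfl
    · exact mul_le_mul_of_nonneg_right (hk i) (hM i k hik)
  exact (hle.trans_lt (mul_neg_of_pos_of_neg hzk (hcol k))).not_ge (hz k)

lemma IsMetzler.det_ne_zero [DecidableEq ι] {M : Matrix ι ι ℝ} (hM : M.IsMetzler)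
    (hcol : ∀ j, ∑ i, M i j < 0) : M.det ≠ 0 := by
  refine det_ne_zero_of_sum_col_lt_diag fun k => ?_
  have hoff : ∀ i ∈ Finset.univ.erase k, 0 ≤ M i k :=
    fun i hi => hM i k (Finset.ne_of_mem_erase hi)
  have hsplit := Finset.add_sum_erase _ (fun i => M i k) (Finset.mem_univ k)
  have hdiag : M k k < 0 := by linarith [hsplit, Finset.sum_nonneg hoff, hcol k]
  rw [Finset.sum_congr rfl fun i hi => Real.norm_of_nonneg (hoff i hi), Real.norm_eq_abs,
    abs_of_neg hdiag]
  linarith [hsplit, hcol k]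

lemma IsMetzler.neg_vecMul_inv_le_one [DecidableEq ι] {M : Matrix ι ι ℝ} (hM : M.IsMetzler)
    (hcol : ∀ j, ∑ i, M i j < 0) {κ : ι → ℝ} (hκ : ∀ j, κ j ≤ -∑ i, M i j) :
    -(κ ᵥ* M⁻¹) ≤ 1 := by
  have hinv : M⁻¹ * M = 1 := nonsing_inv_mul M (isUnit_iff_ne_zero.mpr (hM.det_ne_zero hcol))
  have hz : 0 ≤ (-(κ ᵥ* M⁻¹) - 1) ᵥ* M := by
    intro j
    have hone : ((1 : ι → ℝ) ᵥ* M) j = ∑ i, M i j := by simp [vecMul, dotProduct]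
    rw [sub_vecMul, neg_vecMul, vecMul_vecMul, hinv, vecMul_one, Pi.sub_apply, hone]
    simp only [Pi.zero_apply, Pi.neg_apply]
    linarith [hκ j]
  exact sub_nonpos.mp (hM.nonpos_of_nonneg_vecMul hcol hz)

lemma det_ne_zero_of_forall_spectrum_re_neg [DecidableEq ι] (L : Matrix ι ι ℝ)
    (h : ∀ μ ∈ spectrum ℂ (L.map (Complex.ofReal : ℝ → ℂ)), μ.re < 0) : L.det ≠ 0 := by
  intro hdet
  have hzero : (0 : ℂ) ∈ spectrum ℂ (L.map (Complex.ofReal : ℝ → ℂ)) := by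
    have hmap : (L.map (Complex.ofReal : ℝ → ℂ)).det = (L.det : ℂ) :=
      (RingHom.map_det Complex.ofRealHom L).symm
    simp [spectrum.zero_mem_iff, isUnit_iff_isUnit_det, hmap, hdet]
  simpa using h 0 hzero

lemma continuousAt_vecMul_inv_sub_smul_one [DecidableEq ι] {L : Matrix ι ι ℝ} (hL : L.det ≠ 0)
    (κ : ι → ℝ) : ContinuousAt (fun ε : ℝ => κ ᵥ* (L - ε • 1)⁻¹) 0 := by
  have hpath : Continuous fun ε : ℝ => L - ε • (1 : Matrix ι ι ℝ) := by fun_prop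
  have hinv : ContinuousAt (fun ε : ℝ => (L - ε • (1 : Matrix ι ι ℝ))⁻¹) 0 := by
    refine (continuousAt_matrix_inv _ ?_).comp hpath.continuousAt
    rw [Ring.inverse_eq_inv']
    exact continuousAt_inv₀ (by simpa using hL)
  exact (continuous_const.matrix_vecMul continuous_id).continuousAt.comp hinv

end Matrix

/-- Let `L` be Metzler with nonpositive column sums and Hurwitz, and let
`κ` be a row vector with `0 ≤ κ ℓ ≤ -(∑ h, L h ℓ)` for all `ℓ`. Then the row vector
`-κ ⬝ L⁻¹` is entrywise at most the all-ones row vector. -/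
theorem stmt11 {n : ℕ} (L : Matrix (Fin n) (Fin n) ℝ)
    (hMetzler : ∀ i j, i ≠ j → 0 ≤ L i j)
    (hcol : ∀ j, ∑ i, L i j ≤ 0)
    (hHurwitz : ∀ μ ∈ spectrum ℂ (L.map (Complex.ofReal : ℝ → ℂ)), μ.re < 0)
    (κ : Fin n → ℝ) (hκ : ∀ ℓ, 0 ≤ κ ℓ ∧ κ ℓ ≤ -∑ h, L h ℓ) :
    ∀ j, -(κ ᵥ* L⁻¹) j ≤ 1 := by
  intro j
  have hshift : ∀ ε : ℝ, 0 < ε → -(κ ᵥ* (L - ε • 1)⁻¹) j ≤ 1 := by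
    intro ε hε
    have hcolε : ∀ j, ∑ i, (L - ε • 1) i j < 0 := fun j => by
      rw [sum_sub_smul_one_apply]; linarith [hcol j]
    refine IsMetzler.neg_vecMul_inv_le_one (IsMetzler.sub_smul_one hMetzler ε) hcolε
      (fun j => ?_) j
    rw [sum_sub_smul_one_apply]; linarith [(hκ j).2]
  have hcont : ContinuousAt (fun ε : ℝ => -(κ ᵥ* (L - ε • 1)⁻¹) j) 0 :=
    ContinuousAt.neg ((continuousAt_apply j _).comp (continuousAt_vecMul_inv_sub_smul_one
      (det_ne_zero_of_forall_spectrum_re_neg L hHurwitz) κ))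
  have hlim := hcont.continuousWithinAt (s := Set.Ioi 0)
  simpa using le_of_tendsto hlim.tendsto (eventually_nhdsWithin_of_forall hshift)
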